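/- arXiv:1401.2737 — 3 statements merged into one kernel-verified Lean document; each statement's English description precedes it below -/
import Mathlib

section
/- Define the coefficients \vartheta(n, k_1, j) of the polynomial x^{\underline{n}}/(x - k_1) for 0 \leq k_1 \leq n-1 by: \vartheta(n,0,j) = s(n,j+1); \vartheta(n,k_1,0) = 0 for k_1 > 0; and \vartheta(n,k_1,j) = -\sum_{i=1}^{j} s(n,i) k_1^{i-j-1} for k_1 > 0, j > 0. Then these coefficients satisfy the recurrence \vartheta(n+1, k_1, j) = \vartheta(n, k_1, j-1) - n \cdot \vartheta(n, k_1, j). -/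
open Polynomial Finset

/-- The signed Stirling numbers of the first kind, as coefficients of the falling factorial. -/
noncomputable def stirlingFirst (n m : ℕ) : ℤ :=
  ((∏ j ∈ Finset.range n, (X - C (j : ℤ))).coeff m)

/-- The coefficients ϑ(n, k₁, j) of the polynomial x^{\underline n}/(x - k₁),
defined by the explicit formulas of the paper. -/
noncomputable def theta (n k₁ j : ℕ) : ℚ :=
  if k₁ = 0 then (stirlingFirst n (j + 1) : ℚ)
  else if j = 0 then 0
  else -∑ i ∈ Finset.Icc 1 j, (stirlingFirst n i : ℚ) * (k₁ : ℚ) ^ ((i : ℤ) - (j : ℤ) - 1)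

lemma stirling_rec (n m : ℕ) :
    stirlingFirst (n + 1) (m + 1) = stirlingFirst n m - n * stirlingFirst n (m + 1) := by
  unfold stirlingFirst
  rw [Finset.prod_range_succ, mul_sub, coeff_sub, coeff_mul_X, coeff_mul_C]
  ring

lemma stirling_zero (n : ℕ) (hn : 1 ≤ n) : stirlingFirst n 0 = 0 := by
  unfold stirlingFirst
  rw [Polynomial.coeff_zero_eq_eval_zero, Polynomial.eval_prod]
  refine Finset.prod_eq_zero (Finset.mem_range.2 hn) ?_
  simp

lemma theta_eq (n k₁ j : ℕ) (hk : k₁ ≠ 0) :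
    theta n k₁ j = -∑ i ∈ Finset.Icc 1 j,
      (stirlingFirst n i : ℚ) * (k₁ : ℚ) ^ ((i : ℤ) - (j : ℤ) - 1) := by
  unfold theta
  rcases j with _ | j
  · simp [hk]
  · simp [hk]

/-- the coefficients ϑ satisfy the Stirling-type recurrence
ϑ(n+1, k₁, j) = ϑ(n, k₁, j-1) - n·ϑ(n, k₁, j). -/
theorem stmt_4 (n k₁ j : ℕ) (hk : k₁ < n) (hj : 1 ≤ j) :
    theta (n + 1) k₁ j = theta n k₁ (j - 1) - (n : ℚ) * theta n k₁ j := by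
  obtain ⟨j, rfl⟩ : ∃ j', j = j' + 1 := ⟨j - 1, by omega⟩
  rcases Nat.eq_zero_or_pos k₁ with rfl | hk1
  · simp only [theta, if_pos rfl, Nat.add_sub_cancel]
    rw [stirling_rec]
    push_cast
    ring
  · have hkne : k₁ ≠ 0 := hk1.ne'
    have hn2 : 1 ≤ n := by omega
    rw [theta_eq _ _ _ hkne, theta_eq _ _ _ hkne, Nat.add_sub_cancel, theta_eq _ _ _ hkne]
    have h1 : ∀ i ∈ Finset.Icc 1 (j + 1),
        (stirlingFirst (n + 1) i : ℚ) * (k₁ : ℚ) ^ ((i : ℤ) - (j + 1 : ℕ) - 1)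
        = ((stirlingFirst n (i - 1) : ℚ) - n * stirlingFirst n i)
            * (k₁ : ℚ) ^ ((i : ℤ) - (j + 1 : ℕ) - 1) := by
      intro i hi
      simp only [Finset.mem_Icc] at hi
      obtain ⟨i, rfl⟩ : ∃ i', i = i' + 1 := ⟨i - 1, by omega⟩
      rw [stirling_rec, Nat.add_sub_cancel]
      push_cast
      ring
    rw [Finset.sum_congr rfl h1]
    simp only [sub_mul, Finset.sum_sub_distrib]
    have h2 : ∑ i ∈ Finset.Icc 1 (j + 1),
        (stirlingFirst n (i - 1) : ℚ) * (k₁ : ℚ) ^ ((i : ℤ) - (j + 1 : ℕ) - 1)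
        = ∑ i ∈ Finset.Icc 1 j,
        (stirlingFirst n i : ℚ) * (k₁ : ℚ) ^ ((i : ℤ) - (j : ℕ) - 1) := by
      rw [show Finset.Icc 1 (j + 1) = Finset.map (addLeftEmbedding 1) (Finset.Icc 0 j) by
        rw [Finset.map_add_left_Icc]; (congr 1; omega)]
      rw [Finset.sum_map]
      rw [show Finset.Icc 0 j = insert 0 (Finset.Icc 1 j) by ext x; simp; omega]
      rw [Finset.sum_insert (by simp)]
      have : (stirlingFirst n (addLeftEmbedding 1 0 - 1) : ℚ) = 0 := by
        simp [addLeftEmbedding, stirling_zero n hn2]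
      rw [this, zero_mul, zero_add]
      refine Finset.sum_congr rfl fun i hi => ?_
      simp only [Finset.mem_Icc] at hi
      have he : addLeftEmbedding 1 i = i + 1 := by simp [addLeftEmbedding, add_comm]
      rw [he, Nat.add_sub_cancel]
      congr 1
      push_cast
      ring_nf
    rw [h2]
    have h3 : ∑ x ∈ Finset.Icc 1 (j + 1),
        (n : ℚ) * (stirlingFirst n x) * (k₁ : ℚ) ^ ((x : ℤ) - (j + 1 : ℕ) - 1)
        = (n : ℚ) * ∑ x ∈ Finset.Icc 1 (j + 1),
        (stirlingFirst n x : ℚ) * (k₁ : ℚ) ^ ((x : ℤ) - (j + 1 : ℕ) - 1) := by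
      rw [Finset.mul_sum]
      exact Finset.sum_congr rfl fun i _ => by ring
    rw [h3]
    ring
end

section
/- For integers m \geq n \geq l \geq 1, the l-th derivative of the falling factorial evaluated at m satisfies (d^l/dx^l x^{\underline{n}})|_{x=m} = l! \cdot m^{\underline{n}} \cdot H_{m,l,m-n}, where H_{m,l,m-n} = \sum_{m-n < k_1 < \cdots < k_l \leq m} 1/(k_1 \cdots k_l). -/
open Finset

/-- The elementary symmetric harmonic sum H_{n,l,r} = ∑_{r < k₁ < ⋯ < k_l ≤ n} 1/(k₁⋯k_l),
i.e. the degree-l elementary symmetric polynomial in 1/(r+1), …, 1/n. -/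
def esHarmonic (n l r : ℕ) : ℚ :=
  ∑ S ∈ (Finset.Icc (r + 1) n).powersetCard l, ∏ k ∈ S, (1 : ℚ) / k

open Polynomial

lemma iterD_add (k : ℕ) (p q : ℚ[X]) :
    derivative^[k] (p + q) = derivative^[k] p + derivative^[k] q := by
  induction k generalizing p q with
  | zero => rfl
  | succ n ih =>
      rw [Function.iterate_succ_apply, Function.iterate_succ_apply (f := ⇑derivative) (n := n) (x := p),
        Function.iterate_succ_apply (f := ⇑derivative) (n := n) (x := q), derivative_add, ih]

lemma subB (c : ℚ) (Q : ℚ[X]) (l : ℕ) :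
    derivative^[l + 1] ((X - C c) * Q) =
      (X - C c) * derivative^[l + 1] Q + C ((l : ℚ) + 1) * derivative^[l] Q := by
  induction l generalizing Q with
  | zero => simp [derivative_mul]; ring
  | succ k ih =>
      rw [Function.iterate_succ_apply, derivative_mul, derivative_sub, derivative_X,
        derivative_C, sub_zero, one_mul, iterD_add _, ih (derivative Q)]
      rw [← Function.iterate_succ_apply, ← Function.iterate_succ_apply]
      simp only [Nat.succ_eq_add_one, Nat.add_comm 1 k]
      push_cast [map_add, Polynomial.C_1]
      ring

lemma keyA (a : ℕ → ℚ) (T : Finset ℕ) (l : ℕ) :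
    derivative^[l] (∏ j ∈ T, (X - C (a j))) =
      C (l.factorial : ℚ) * ∑ S ∈ T.powersetCard l, ∏ j ∈ T \ S, (X - C (a j)) := by
  induction T using Finset.induction_on generalizing l with
  | empty =>
      cases l with
      | zero => simp
      | succ k => simp [iterate_derivative_one (Nat.succ_pos k)]
  | @insert x T hx ih =>
      cases l with
      | zero => simp
      | succ k =>
          rw [Finset.prod_insert hx, subB, ih (k + 1), ih k,
            powersetCard_succ_insert hx,
            Finset.sum_union, Finset.sum_image]
          · have h1 : ∀ S ∈ T.powersetCard (k + 1),
                (∏ j ∈ insert x T \ S, (X - C (a j))) =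
                  (X - C (a x)) * ∏ j ∈ T \ S, (X - C (a j)) := by
              intro S hS
              rw [Finset.mem_powersetCard] at hS
              rw [Finset.insert_sdiff_of_notMem _ (fun h => hx (hS.1 h)),
                Finset.prod_insert (by simp [hx])]
            have h2 : ∀ S ∈ T.powersetCard k,
                (∏ j ∈ insert x T \ insert x S, (X - C (a j))) =
                  ∏ j ∈ T \ S, (X - C (a j)) := by
              intro S hS
              rw [Finset.mem_powersetCard] at hS
              congr 1
              ext y
              simp only [Finset.mem_sdiff, Finset.mem_insert, not_or]
              constructor
              · rintro ⟨hy1 | hy1, hy2, hy3⟩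
                · exact absurd hy1 hy2
                · exact ⟨hy1, hy3⟩
              · rintro ⟨hy1, hy2⟩
                exact ⟨Or.inr hy1, fun h => hx (h ▸ hy1), hy2⟩
            rw [Finset.sum_congr rfl h1, Finset.sum_congr rfl h2]
            rw [Nat.factorial_succ]
            push_cast [map_mul, map_add]
            rw [mul_add, ← Finset.mul_sum]
            ring
          · -- injOn of insert x
            intro S1 hS1 S2 hS2 h
            rw [Finset.mem_coe, Finset.mem_powersetCard] at hS1 hS2
            have e1 : S1 = (insert x S1).erase x :=
              (Finset.erase_insert (fun h => hx (hS1.1 h))).symm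
            rw [e1, h, Finset.erase_insert (fun h => hx (hS2.1 h))]
          · -- disjoint
            rw [Finset.disjoint_left]
            intro S hS hS'
            rw [Finset.mem_powersetCard] at hS
            rw [Finset.mem_image] at hS'
            obtain ⟨S', _, rfl⟩ := hS'
            exact hx (hS.1 (Finset.mem_insert_self x S'))

open Polynomial in
/-- for m ≥ n ≥ l ≥ 1, the l-th derivative of the falling factorial at m is
l!·m^{\underline n}·H_{m,l,m-n}. -/
theorem stmt_11 (n l m : ℕ) (hl : 1 ≤ l) (hn : l ≤ n) (hm : n ≤ m) :
    Polynomial.eval (m : ℚ)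
        (Polynomial.derivative^[l] (∏ j ∈ Finset.range n, (X - C (j : ℚ)))) =
      (l.factorial : ℚ) * (∏ j ∈ Finset.range n, ((m : ℚ) - j)) * esHarmonic m l (m - n) := by
  rw [keyA (fun j => (j : ℚ)) (Finset.range n) l]
  rw [eval_mul, eval_C, eval_finset_sum]
  simp only [eval_prod, eval_sub, eval_X, eval_C]
  rw [mul_assoc]
  congr 1
  have hne : ∀ j ∈ Finset.range n, ((m : ℚ) - j) ≠ 0 := by
    intro j hj
    rw [Finset.mem_range] at hj
    have : (j : ℚ) < m := by exact_mod_cast lt_of_lt_of_le hj hm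
    linarith
  have step1 : ∀ S ∈ (Finset.range n).powersetCard l,
      (∏ j ∈ Finset.range n \ S, ((m : ℚ) - j)) =
        (∏ j ∈ Finset.range n, ((m : ℚ) - j)) * ∏ j ∈ S, (1 / ((m : ℚ) - j)) := by
    intro S hS
    rw [Finset.mem_powersetCard] at hS
    have hsd := Finset.prod_sdiff (s₁ := S) (s₂ := Finset.range n) (f := fun j => (m : ℚ) - j) hS.1
    have hSne : (∏ j ∈ S, ((m : ℚ) - j)) ≠ 0 :=
      Finset.prod_ne_zero_iff.2 fun j hj => hne j (hS.1 hj)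
    rw [← hsd]
    field_simp
    rw [mul_assoc, ← Finset.prod_mul_distrib,
      Finset.prod_eq_one (fun j hj => mul_one_div_cancel (hne j (hS.1 hj))), mul_one]
  rw [Finset.sum_congr rfl step1, ← Finset.mul_sum]
  congr 1
  unfold esHarmonic
  refine Finset.sum_nbij' (fun S => S.image (fun j => m - j))
    (fun S => S.image (fun k => m - k)) ?_ ?_ ?_ ?_ ?_
  · intro S hS
    rw [Finset.mem_powersetCard] at hS ⊢
    constructor
    · intro y hy
      rw [Finset.mem_image] at hy
      obtain ⟨j, hj, rfl⟩ := hy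
      have h1 := Finset.mem_range.1 (hS.1 hj)
      rw [Finset.mem_Icc]
      omega
    · rw [← hS.2]
      apply Finset.card_image_of_injOn
      intro a ha b hb h
      have h1 := Finset.mem_range.1 (hS.1 ha)
      have h2 := Finset.mem_range.1 (hS.1 hb)
      have h3 : m - a = m - b := h
      omega
  · intro S hS
    rw [Finset.mem_powersetCard] at hS ⊢
    constructor
    · intro y hy
      rw [Finset.mem_image] at hy
      obtain ⟨k, hk, rfl⟩ := hy
      have h1 := Finset.mem_Icc.1 (hS.1 hk)
      rw [Finset.mem_range]
      omega
    · rw [← hS.2]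
      apply Finset.card_image_of_injOn
      intro a ha b hb h
      have h1 := Finset.mem_Icc.1 (hS.1 ha)
      have h2 := Finset.mem_Icc.1 (hS.1 hb)
      have h3 : m - a = m - b := h
      omega
  · intro S hS
    rw [Finset.mem_powersetCard] at hS
    rw [Finset.image_image]
    have : Finset.image ((fun k => m - k) ∘ fun j => m - j) S = Finset.image id S := by
      apply Finset.image_congr
      intro j hj
      have h1 := Finset.mem_range.1 (hS.1 hj)
      simp only [Function.comp_apply, id_eq]
      omega
    rw [this, Finset.image_id]
  · intro S hS
    rw [Finset.mem_powersetCard] at hS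
    rw [Finset.image_image]
    have : Finset.image ((fun j => m - j) ∘ fun k => m - k) S = Finset.image id S := by
      apply Finset.image_congr
      intro k hk
      have h1 := Finset.mem_Icc.1 (hS.1 hk)
      simp only [Function.comp_apply, id_eq]
      omega
    rw [this, Finset.image_id]
  · intro S hS
    rw [Finset.mem_powersetCard] at hS
    rw [Finset.prod_image ?_]
    · apply Finset.prod_congr rfl
      intro j hj
      have h1 := Finset.mem_range.1 (hS.1 hj)
      congr 1
      rw [Nat.cast_sub (by omega)]
    · intro a ha b hb h
      have h1 := Finset.mem_range.1 (hS.1 ha)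
      have h2 := Finset.mem_range.1 (hS.1 hb)
      have h3 : m - a = m - b := h
      omega
end

section
/- Define A_{r,k} by A_{r,0} = 1, A_{0,k} = 0 for k \geq 1, and A_{r,k} = A_{r-1,k} + A_{r,k-1}/r for r, k \geq 1. Then A_{r,k} = \sum_{j=1}^{r} (-1)^{j+1} \binom{r}{j} / j^k for all r \geq 0, k \geq 1. -/
open Finset

/-- The doubly-indexed sequence A_{r,k} with A_{r,0} = 1, A_{0,k} = 0 for k ≥ 1, and
A_{r,k} = A_{r-1,k} + A_{r,k-1}/r for r, k ≥ 1. -/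
def A : ℕ → ℕ → ℚ
  | _, 0 => 1
  | 0, _ + 1 => 0
  | r + 1, k + 1 => A r (k + 1) + A (r + 1) k / (r + 1)

noncomputable def B (r k : ℕ) : ℚ := ∑ i ∈ range r, (-1) ^ i * (r.choose (i+1) : ℚ) / ((i : ℚ) + 1) ^ k

lemma B_eq (r k : ℕ) :
    (∑ j ∈ Finset.Icc 1 r, (-1) ^ (j + 1) * (r.choose j : ℚ) / (j : ℚ) ^ k) = B r k := by
  have hmap : Finset.Icc 1 r = (range r).map ⟨Nat.succ, Nat.succ_injective⟩ := by
    ext x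
    simp only [Finset.mem_Icc, Finset.mem_map, Finset.mem_range, Function.Embedding.coeFn_mk,
      Nat.succ_eq_add_one]
    constructor
    · rintro ⟨h1, h2⟩; exact ⟨x - 1, by omega, by omega⟩
    · rintro ⟨i, hi, rfl⟩; omega
  rw [hmap, Finset.sum_map, B]
  refine Finset.sum_congr rfl fun i _ => ?_
  simp only [Function.Embedding.coeFn_mk, Nat.succ_eq_add_one]
  have : (-1 : ℚ) ^ (i + 1 + 1) = (-1) ^ i := by rw [pow_add]; ring
  rw [this]
  push_cast
  ring_nf

lemma B_zero (r : ℕ) : B (r + 1) 0 = 1 := by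
  have h := Int.alternating_sum_range_choose (n := r + 1)
  simp only [Nat.succ_ne_zero, if_false] at h
  have h2 : (∑ i ∈ range (r + 2), (-1 : ℚ) ^ i * ((r+1).choose i : ℚ)) = 0 := by
    have := congrArg (fun z : ℤ => (z : ℚ)) h
    push_cast at this ⊢
    exact this
  rw [Finset.sum_range_succ'] at h2
  simp only [pow_zero, one_mul, Nat.cast_zero, Nat.choose_zero_right, Nat.cast_one] at h2
  have : (∑ i ∈ range (r + 1), (-1 : ℚ) ^ (i + 1) * ((r+1).choose (i+1) : ℚ)) = -1 := by
    linarith [h2]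
  unfold B
  calc (∑ i ∈ range (r+1), (-1:ℚ)^i * ((r+1).choose (i+1) : ℚ) / ((i:ℚ)+1)^0)
      = -(∑ i ∈ range (r + 1), (-1 : ℚ) ^ (i + 1) * ((r+1).choose (i+1) : ℚ)) := by
        rw [← Finset.sum_neg_distrib]
        refine Finset.sum_congr rfl fun i _ => ?_
        rw [pow_succ]; ring
    _ = 1 := by rw [this]; ring

lemma B_key (r k : ℕ) : B (r+1) (k+1) = B r (k+1) + B (r+1) k / (r+1) := by
  unfold B
  have hsplit : ∀ i ∈ range (r+1),
      (-1:ℚ)^i * ((r+1).choose (i+1) : ℚ) / ((i:ℚ)+1)^(k+1)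
      = (-1:ℚ)^i * (r.choose (i+1) : ℚ) / ((i:ℚ)+1)^(k+1)
        + (-1:ℚ)^i * (r.choose i : ℚ) / ((i:ℚ)+1)^(k+1) := by
    intro i _
    rw [Nat.choose_succ_succ]
    push_cast
    ring
  rw [Finset.sum_congr rfl hsplit, Finset.sum_add_distrib]
  congr 1
  · -- first part: last term vanishes
    rw [Finset.sum_range_succ, Nat.choose_succ_self]
    simp
  · -- second part
    rw [Finset.sum_div]
    refine Finset.sum_congr rfl fun i hi => ?_
    have h := Nat.add_one_mul_choose_eq r i
    have hq : ((r:ℚ)+1) * (r.choose i : ℚ) = ((r+1).choose (i+1) : ℚ) * ((i:ℚ)+1) := by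
      exact_mod_cast congrArg (fun n : ℕ => (n : ℚ)) h
    have hi1 : ((i:ℚ)+1) ≠ 0 := by positivity
    have hr1 : ((r:ℚ)+1) ≠ 0 := by positivity
    rw [div_div, pow_succ]
    rw [div_eq_div_iff (by positivity) (by positivity)]
    linear_combination ((-1:ℚ)^i * ((i:ℚ)+1)^k) * hq

/-- A_{r,k} = ∑_{j=1}^r (-1)^{j+1} C(r,j) / j^k for all r ≥ 0, k ≥ 1. -/
theorem stmt_14 (r k : ℕ) (hk : 1 ≤ k) :
    A r k = ∑ j ∈ Finset.Icc 1 r, (-1) ^ (j + 1) * (r.choose j : ℚ) / (j : ℚ) ^ k := by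
  rw [B_eq]
  induction r generalizing k with
  | zero =>
    cases k with
    | zero => omega
    | succ k => simp [A, B]
  | succ r ih =>
    induction k with
    | zero => omega
    | succ k ihk =>
      rcases Nat.eq_zero_or_pos k with rfl | hkpos
      · simp only [A, B_key, ih 1 le_rfl, B_zero]
      · simp only [A]
        rw [B_key, ih (k+1) (by omega), ihk hkpos]
end
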